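/- Let N ≥ 1 and 1 ≤ r ≤ N, let q ∈ ℂ satisfy q ≠ 0 and q^{2k} ≠ 1 for all 1 ≤ k ≤ N, and let λ_1 ≥ λ_2 ≥ ⋯ ≥ λ_N ≥ 0 be integers with conjugate parts λ'_m := #{ i ∈ {1,…,N} : λ_i ≥ m } for m ≥ 1. Then Σ_{J ⊆ {1,…,N}, #J = r} (Σ_{j∈J} λ_j) · ∏_{j∈J} q^{N−2j+1} = Σ_{m=1}^{λ_1} Σ_{s=1}^{r} (−1)^{s−1} · [N choose r−s]_q · q^{s(N−λ'_m)} · [s·λ'_m]_q/[s]_q. -/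

import Mathlib

/-!
Index the parts from 0 and put `x_j = q^(N-2j-1)`, so that the weight of `J` is `∏_{j∈J} x_j`
and, by the q-binomial theorem, `e_k(x) = [N choose k]_q`. Removing `x_i` from the generating
function `∏_j (1 + x_j t)` shows that the `r`-subsets containing `i` contribute
`∑_{s≥1} (-1)^(s-1) x_i^s e_(r-s)(x)`, so the left side equals
`∑_s (-1)^(s-1) e_(r-s)(x) ∑_i λ_i x_i^s`. Finally `λ_i = #{m ≥ 1 : m ≤ λ_i}`, and as `λ` is
decreasing, `{i : m ≤ λ_i}` consists of the first `λ'_m` indices, over which `∑ x_i^s` is the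
geometric sum `q^(s(N-λ'_m)) [sλ'_m]_q / [s]_q`.
-/

open scoped BigOperators

noncomputable section

namespace Stmt15

/-- The symmetric q-integer `[n]_q = (qⁿ − q⁻ⁿ)/(q − q⁻¹)`. -/
def qint (q : ℂ) (n : ℕ) : ℂ := (q ^ n - q⁻¹ ^ n) / (q - q⁻¹)

/-- The q-factorial `[n]_q! = [n]_q · [n−1]_q ⋯ [1]_q` (with `[0]_q! = 1`). -/
def qfact (q : ℂ) : ℕ → ℂ
  | 0 => 1
  | n + 1 => qint q (n + 1) * qfact q n

/-- The q-binomial coefficient `[n choose r]_q = [n]_q!/([r]_q!·[n−r]_q!)`. -/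
def qbinom (q : ℂ) (n r : ℕ) : ℂ := qfact q n / (qfact q r * qfact q (n - r))

/-- The conjugate partition: `λ'_m = #{i : λ_i ≥ m}`.  Here `lam i` is the part `λ_{i+1}`. -/
def conjPart (N : ℕ) (lam : Fin N → ℕ) (m : ℕ) : ℕ :=
  (Finset.univ.filter fun i : Fin N => m ≤ lam i).card

end Stmt15

open Finset

namespace Multiset

variable {R : Type*} [CommRing R]

theorem esymm_cons_succ (a : R) (s : Multiset R) (k : ℕ) :
    (a ::ₘ s).esymm (k + 1) = s.esymm (k + 1) + a * s.esymm k := by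
  simp only [esymm, powersetCard_cons, map_add, sum_add, map_map, Function.comp_def, prod_cons,
    sum_map_mul_left]

theorem esymm_eq_sum_esymm_cons (a : R) (s : Multiset R) (k : ℕ) :
    s.esymm k = ∑ t ∈ Finset.range (k + 1), (-a) ^ t * (a ::ₘ s).esymm (k - t) := by
  induction k with
  | zero => simp [esymm]
  | succ k ih =>
    have hstep : s.esymm (k + 1) = (a ::ₘ s).esymm (k + 1) - a * s.esymm k := by
      rw [esymm_cons_succ]; ring
    rw [hstep, ih, Finset.sum_range_succ' _ (k + 1), Finset.mul_sum, sub_eq_add_neg, add_comm,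
      ← Finset.sum_neg_distrib]
    simp only [pow_zero, one_mul, Nat.sub_zero, Nat.add_sub_add_right]
    congr 1
    exact Finset.sum_congr rfl fun t _ => by ring

theorem esymm_cons_sub_esymm (a : R) (s : Multiset R) (k : ℕ) :
    (a ::ₘ s).esymm k - s.esymm k
      = ∑ t ∈ Finset.Icc 1 k, (-1) ^ (t - 1) * a ^ t * (a ::ₘ s).esymm (k - t) := by
  rw [esymm_eq_sum_esymm_cons a s k, Finset.sum_range_succ', ← Finset.Ico_add_one_right_eq_Icc,
    Finset.sum_Ico_eq_sum_range, Nat.add_sub_cancel]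
  simp only [pow_zero, one_mul, Nat.sub_zero, sub_add_cancel_right, ← Finset.sum_neg_distrib]
  refine Finset.sum_congr rfl fun t _ => ?_
  rw [add_comm 1 t, Nat.add_sub_cancel]
  ring

end Multiset

namespace Finset

variable {ι R : Type*} [CommRing R] [DecidableEq ι]

theorem powersetCard_erase (s : Finset ι) (i : ι) (k : ℕ) :
    (s.erase i).powersetCard k = (s.powersetCard k).filter (i ∉ ·) := by
  ext J
  simp only [mem_powersetCard, mem_filter, subset_erase]
  tauto

theorem sum_powersetCard_filter_mem_prod {s : Finset ι} {i : ι} (hi : i ∈ s) (x : ι → R)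
    (k : ℕ) :
    ∑ J ∈ (s.powersetCard k).filter (i ∈ ·), ∏ j ∈ J, x j
      = ∑ t ∈ Icc 1 k, (-1) ^ (t - 1) * x i ^ t * (s.val.map x).esymm (k - t) := by
  have hcons : s.val.map x = x i ::ₘ (s.erase i).val.map x := by
    rw [← Multiset.map_cons, ← insert_val_of_notMem (notMem_erase i s), insert_erase hi]
  rw [hcons, ← Multiset.esymm_cons_sub_esymm, ← hcons, esymm_map_val, esymm_map_val,
    powersetCard_erase, eq_sub_iff_add_eq, sum_filter_add_sum_filter_not]

theorem sum_sum_mul_prod_eq_sum_mul_sum_filter_mem (s : Finset ι) (c x : ι → R) (k : ℕ) :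
    ∑ J ∈ s.powersetCard k, (∑ j ∈ J, c j) * ∏ j ∈ J, x j
      = ∑ i ∈ s, c i * ∑ J ∈ (s.powersetCard k).filter (i ∈ ·), ∏ j ∈ J, x j := by
  simp_rw [mul_sum, sum_filter]
  rw [sum_comm]
  refine sum_congr rfl fun J hJ => ?_
  rw [← sum_filter, sum_mul, filter_mem_eq_inter, inter_eq_right.2 (mem_powersetCard.1 hJ).1]

theorem sum_powersetCard_sum_mul_prod (s : Finset ι) (c x : ι → R) (k : ℕ) :
    ∑ J ∈ s.powersetCard k, (∑ j ∈ J, c j) * ∏ j ∈ J, x j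
      = ∑ t ∈ Icc 1 k, (-1) ^ (t - 1) * (s.val.map x).esymm (k - t) * ∑ i ∈ s, c i * x i ^ t := by
  have hterm : ∀ i ∈ s, c i * ∑ J ∈ (s.powersetCard k).filter (i ∈ ·), ∏ j ∈ J, x j
      = ∑ t ∈ Icc 1 k, (-1) ^ (t - 1) * (s.val.map x).esymm (k - t) * (c i * x i ^ t) := by
    intro i hi
    rw [sum_powersetCard_filter_mem_prod hi, mul_sum]
    exact sum_congr rfl fun t _ => by ring
  rw [sum_sum_mul_prod_eq_sum_mul_sum_filter_mem, sum_congr rfl hterm, sum_comm]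
  simp_rw [mul_sum]

omit [DecidableEq ι] in
theorem sum_nsmul_eq_sum_Icc_sum_filter_le {M : Type*} [AddCommMonoid M] (s : Finset ι)
    (f : ι → ℕ) (g : ι → M) {K : ℕ} (hK : ∀ i ∈ s, f i ≤ K) :
    ∑ i ∈ s, f i • g i = ∑ m ∈ Icc 1 K, ∑ i ∈ s with m ≤ f i, g i := by
  simp_rw [sum_filter]
  rw [sum_comm]
  refine sum_congr rfl fun i hi => ?_
  have hIcc : (Icc 1 K).filter (· ≤ f i) = Icc 1 (f i) := by
    ext m
    simp only [mem_filter, mem_Icc]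
    have := hK i hi
    omega
  rw [← sum_filter, hIcc, sum_const, Nat.card_Icc, Nat.add_sub_cancel]

end Finset

theorem Fin.univ_val_map_val (N : ℕ) :
    (univ : Finset (Fin N)).val.map Fin.val = Multiset.range N := by
  have h := congrArg Finset.val (Fin.map_valEmbedding_univ (n := N))
  rwa [Finset.map_val, Nat.Iio_eq_range] at h

theorem Fin.sum_filter_val_lt {M : Type*} [AddCommMonoid M] (g : ℕ → M) {L N : ℕ} (hL : L ≤ N) :
    ∑ i ∈ univ.filter (fun i : Fin N => (i : ℕ) < L), g i = ∑ i ∈ range L, g i := by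
  have hrange : (range N).filter (· < L) = range L := by
    ext i
    simp only [mem_filter, mem_range]
    omega
  rw [sum_filter, Fin.sum_univ_eq_sum_range (fun i => if i < L then g i else 0), ← sum_filter,
    hrange]

theorem pow_sub_inv_pow_ne_zero {K : Type*} [Field K] {x : K} (hx : x ≠ 0) {n : ℕ}
    (h : x ^ (2 * n) ≠ 1) : x ^ n - x⁻¹ ^ n ≠ 0 := by
  intro hzero
  apply h
  calc x ^ (2 * n) = x ^ n * x⁻¹ ^ n := by rw [← sub_eq_zero.1 hzero, two_mul, pow_add]
    _ = 1 := by rw [← mul_pow, mul_inv_cancel₀ hx, one_pow]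

namespace Stmt15

variable {q : ℂ}

theorem qint_add (q : ℂ) (a b : ℕ) : qint q (a + b) = q ^ b * qint q a + q⁻¹ ^ a * qint q b := by
  simp only [qint]
  ring

theorem qint_ne_zero (hq0 : q ≠ 0) {n : ℕ} (h : q ^ (2 * n) ≠ 1) : qint q n ≠ 0 := by
  have h2 : q ^ (2 * 1) ≠ 1 := fun h1 => h <| by
    rw [pow_mul, (by simpa using h1 : q ^ 2 = 1), one_pow]
  exact div_ne_zero (pow_sub_inv_pow_ne_zero hq0 h) (by simpa using pow_sub_inv_pow_ne_zero hq0 h2)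

theorem qint_one (hq0 : q ≠ 0) (h : q ^ 2 ≠ 1) : qint q 1 = 1 := by
  simp only [qint, pow_one]
  exact div_self (by simpa using pow_sub_inv_pow_ne_zero hq0 (n := 1) (by simpa using h))

theorem qfact_ne_zero (hq0 : q ≠ 0) {N : ℕ} (hq : ∀ k, 1 ≤ k → k ≤ N → q ^ (2 * k) ≠ 1) :
    ∀ {n}, n ≤ N → qfact q n ≠ 0
  | 0, _ => one_ne_zero
  | n + 1, hn =>
    mul_ne_zero (qint_ne_zero hq0 (hq _ (by omega) hn)) (qfact_ne_zero hq0 hq (by omega))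

theorem qbinom_zero_right (hq0 : q ≠ 0) {n : ℕ} (hq : ∀ k, 1 ≤ k → k ≤ n → q ^ (2 * k) ≠ 1) :
    qbinom q n 0 = 1 := by
  simp [qbinom, qfact, qfact_ne_zero hq0 hq le_rfl]

theorem qbinom_self (hq0 : q ≠ 0) {n : ℕ} (hq : ∀ k, 1 ≤ k → k ≤ n → q ^ (2 * k) ≠ 1) :
    qbinom q n n = 1 := by
  simp [qbinom, qfact, qfact_ne_zero hq0 hq le_rfl]

theorem qbinom_succ_succ (hq0 : q ≠ 0) {M k : ℕ} (hkM : k < M)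
    (hq : ∀ j, 1 ≤ j → j ≤ M → q ^ (2 * j) ≠ 1) :
    qbinom q (M + 1) (k + 1) = q ^ (k + 1) * qbinom q M (k + 1) + q⁻¹ ^ (M - k) * qbinom q M k := by
  obtain ⟨l, rfl⟩ : ∃ l, M = k + 1 + l := ⟨M - (k + 1), by omega⟩
  have hk : qfact q k ≠ 0 := qfact_ne_zero hq0 hq (by omega)
  have hl : qfact q l ≠ 0 := qfact_ne_zero hq0 hq (by omega)
  have hk1 : qint q (k + 1) ≠ 0 := qint_ne_zero hq0 (hq _ (by omega) (by omega))
  have hl1 : qint q (l + 1) ≠ 0 := qint_ne_zero hq0 (hq _ (by omega) (by omega))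
  simp only [qbinom, show k + 1 + l + 1 - (k + 1) = l + 1 by omega,
    show k + 1 + l - (k + 1) = l by omega, show k + 1 + l - k = l + 1 by omega, qfact]
  rw [show k + 1 + l + 1 = l + 1 + (k + 1) by omega, qint_add q (l + 1) (k + 1)]
  field_simp

def qPowers (q : ℂ) (M : ℕ) : Multiset ℂ :=
  (Multiset.range M).map fun j : ℕ => q ^ ((M : ℤ) - 2 * j - 1)

theorem qPowers_succ (hq0 : q ≠ 0) (M : ℕ) :
    qPowers q (M + 1) = q⁻¹ ^ M ::ₘ (qPowers q M).map (q * ·) := by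
  simp only [qPowers, Multiset.range_succ, Multiset.map_cons, Multiset.map_map, Function.comp_def]
  congr 1
  · rw [inv_pow, ← zpow_natCast, ← zpow_neg]
    congr 1
    push_cast
    ring
  · refine Multiset.map_congr rfl fun j _ => ?_
    rw [← zpow_one_add₀ hq0]
    congr 1
    push_cast
    ring

theorem esymm_qPowers (hq0 : q ≠ 0) {M : ℕ} (hq : ∀ j, 1 ≤ j → j ≤ M → q ^ (2 * j) ≠ 1)
    {k : ℕ} (hk : k ≤ M) : (qPowers q M).esymm k = qbinom q M k := by
  induction M generalizing k with
  | zero =>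
    obtain rfl : k = 0 := by omega
    simp [qPowers, Multiset.esymm, qbinom, qfact]
  | succ M ih =>
    have hqM : ∀ j, 1 ≤ j → j ≤ M → q ^ (2 * j) ≠ 1 := fun j h1 h2 => hq j h1 (by omega)
    have hsmul (k : ℕ) : ((qPowers q M).map (q * ·)).esymm k = q ^ k * (qPowers q M).esymm k := by
      simpa using (Multiset.pow_smul_esymm q k (qPowers q M)).symm
    rcases k with _ | k
    · simpa [Multiset.esymm] using (qbinom_zero_right hq0 hq).symm
    rw [qPowers_succ hq0, Multiset.esymm_cons_succ, hsmul, hsmul]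
    rcases (by omega : k < M ∨ k = M) with hkM | rfl
    · have hpow : q⁻¹ ^ M * q ^ k = q⁻¹ ^ (M - k) := by
        rw [← Nat.sub_add_cancel hkM.le, pow_add, mul_assoc, ← mul_pow, inv_mul_cancel₀ hq0,
          one_pow, mul_one, Nat.add_sub_cancel]
      rw [ih hqM hkM, ih hqM hkM.le, qbinom_succ_succ hq0 hkM hqM, ← hpow]
      ring
    · have hempty : (qPowers q k).esymm (k + 1) = 0 := by
        simp [Multiset.esymm, Multiset.powersetCard_eq_empty, qPowers]
      rw [hempty, ih hqM le_rfl, qbinom_self hq0 hqM, qbinom_self hq0 hq, mul_zero, zero_add,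
        mul_one, ← mul_pow, inv_mul_cancel₀ hq0, one_pow]

theorem qint_eq_sum_zpow {u : ℂ} (hu0 : u ≠ 0) (hu : u ^ 2 ≠ 1) (L : ℕ) :
    qint u L = ∑ i ∈ range L, u ^ ((L : ℤ) - 2 * i - 1) := by
  induction L with
  | zero => simp [qint]
  | succ L ih =>
    rw [add_comm L 1, qint_add, ih, qint_one hu0 hu, add_comm 1 L, sum_range_succ', mul_sum]
    simp only [mul_one, pow_one]
    rw [add_comm]
    congr 1
    · refine sum_congr rfl fun i _ => ?_
      rw [← zpow_neg_one, ← zpow_add₀ hu0]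
      congr 1
      push_cast
      ring
    · rw [← zpow_natCast]
      congr 1
      push_cast
      ring

theorem qint_mul (hq0 : q ≠ 0) {s : ℕ} (hs : q ^ (2 * s) ≠ 1) (L : ℕ) :
    qint q (s * L) = qint (q ^ s) L * qint q s := by
  simp only [qint, ← inv_pow, ← pow_mul]
  rw [div_mul_div_cancel₀ (pow_sub_inv_pow_ne_zero hq0 hs)]

theorem sum_range_zpow_pow (hq0 : q ≠ 0) {s L N : ℕ} (hs : q ^ (2 * s) ≠ 1) (hL : L ≤ N) :
    ∑ i ∈ range L, (q ^ ((N : ℤ) - 2 * i - 1)) ^ s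
      = q ^ (s * (N - L)) * (qint q (s * L) / qint q s) := by
  have hs' : (q ^ s) ^ 2 ≠ 1 := by rwa [← pow_mul, mul_comm]
  rw [qint_mul hq0 hs, mul_div_cancel_right₀ _ (qint_ne_zero hq0 hs),
    qint_eq_sum_zpow (pow_ne_zero s hq0) hs', mul_sum]
  refine sum_congr rfl fun i _ => ?_
  simp only [← zpow_natCast, ← zpow_mul, ← zpow_add₀ hq0]
  congr 1
  push_cast [Nat.cast_sub hL]
  ring

theorem conjPart_le (N : ℕ) (lam : Fin N → ℕ) (m : ℕ) : conjPart N lam m ≤ N :=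
  (card_filter_le _ _).trans_eq (card_fin N)

theorem filter_le_eq_filter_lt_conjPart {N : ℕ} {lam : Fin N → ℕ} (hlam : Antitone lam)
    (m : ℕ) :
    univ.filter (fun i => m ≤ lam i) = univ.filter fun i : Fin N => (i : ℕ) < conjPart N lam m := by
  ext i
  simp only [mem_filter, mem_univ, true_and]
  unfold conjPart
  constructor
  · intro hi
    have hsub : Iic i ⊆ univ.filter fun j => m ≤ lam j := fun j hj => by
      simpa using hi.trans (hlam (mem_Iic.1 hj))
    have := card_le_card hsub
    rw [Fin.card_Iic] at this
    omega
  · intro hi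
    by_contra hni
    have hsub : (univ.filter fun j => m ≤ lam j) ⊆ Iio i := fun j hj =>
      mem_Iio.2 (lt_of_not_ge fun hij => hni ((mem_filter.1 hj).2.trans (hlam hij)))
    have := card_le_card hsub
    rw [Fin.card_Iio] at this
    omega

theorem sum_mul_pow_eq_sum_conjPart (hq0 : q ≠ 0) {N : ℕ} {lam : Fin N → ℕ} (hlam : Antitone lam)
    {K : ℕ} (hK : ∀ i, lam i ≤ K) {s : ℕ} (hs : q ^ (2 * s) ≠ 1) :
    ∑ i : Fin N, (lam i : ℂ) * (q ^ ((N : ℤ) - 2 * (i : ℕ) - 1)) ^ s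
      = ∑ m ∈ Icc 1 K, q ^ (s * (N - conjPart N lam m))
          * (qint q (s * conjPart N lam m) / qint q s) := by
  simp_rw [← nsmul_eq_mul]
  rw [sum_nsmul_eq_sum_Icc_sum_filter_le _ _ _ fun i _ => hK i]
  refine sum_congr rfl fun m _ => ?_
  rw [filter_le_eq_filter_lt_conjPart hlam,
    Fin.sum_filter_val_lt (fun i => (q ^ ((N : ℤ) - 2 * i - 1)) ^ s) (conjPart_le N lam m),
    sum_range_zpow_pow hq0 hs (conjPart_le N lam m)]

theorem energy_additivity_identity_general (N r : ℕ) (hN : 0 < N) (hrN : r ≤ N)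
    (q : ℂ) (hq0 : q ≠ 0) (hq : ∀ k, 1 ≤ k → k ≤ N → q ^ (2 * k) ≠ 1)
    (lam : Fin N → ℕ) (hlam : ∀ i j : Fin N, i ≤ j → lam j ≤ lam i) :
    ∑ J ∈ Finset.powersetCard r (Finset.univ : Finset (Fin N)),
        (∑ j ∈ J, (lam j : ℂ)) * ∏ j ∈ J, q ^ ((N : ℤ) - 2 * ((j : ℕ) + 1 : ℤ) + 1)
      = ∑ m ∈ Finset.Icc 1 (lam ⟨0, hN⟩), ∑ s ∈ Finset.Icc 1 r,
          (-1 : ℂ) ^ (s - 1) * qbinom q N (r - s) *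
            q ^ (s * (N - conjPart N lam m)) *
              (qint q (s * conjPart N lam m) / qint q s) := by
  have hexp (j : Fin N) : (N : ℤ) - 2 * ((j : ℕ) + 1 : ℤ) + 1 = (N : ℤ) - 2 * (j : ℕ) - 1 := by
    ring
  have hpowers : (univ : Finset (Fin N)).val.map
      (fun j : Fin N => q ^ ((N : ℤ) - 2 * (j : ℕ) - 1)) = qPowers q N := by
    rw [qPowers, ← Fin.univ_val_map_val, Multiset.map_map]
    rfl
  simp only [hexp]
  rw [sum_powersetCard_sum_mul_prod, hpowers, sum_comm]
  refine sum_congr rfl fun s hs => ?_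
  have hs' := mem_Icc.1 hs
  rw [esymm_qPowers hq0 hq (by omega), sum_mul_pow_eq_sum_conjPart hq0 hlam
    (fun i => hlam ⟨0, hN⟩ i (Nat.zero_le i)) (hq s hs'.1 (by omega)), mul_sum]
  exact sum_congr rfl fun m _ => by ring

/-- Rewriting of the semiclassical eigenvalues in magnon form:
`Σ_{#J = r} (Σ_{j∈J} λ_j)·∏_{j∈J} q^{N−2j+1}
  = Σ_{m=1}^{λ_1} Σ_{s=1}^{r} (−1)^{s−1}·[N choose r−s]_q·q^{s(N−λ'_m)}·[s·λ'_m]_q/[s]_q`.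
Here `lam i = λ_{i+1}` for `i : Fin N` (so `j ∈ {1,…,N}` corresponds to `(j : Fin N) + 1`). -/
theorem energy_additivity_identity (N r : ℕ) (hN : 0 < N) (hr1 : 1 ≤ r) (hrN : r ≤ N)
    (q : ℂ) (hq0 : q ≠ 0) (hq : ∀ k, 1 ≤ k → k ≤ N → q ^ (2 * k) ≠ 1)
    (lam : Fin N → ℕ) (hlam : ∀ i j : Fin N, i ≤ j → lam j ≤ lam i) :
    ∑ J ∈ Finset.powersetCard r (Finset.univ : Finset (Fin N)),
        (∑ j ∈ J, (lam j : ℂ)) * ∏ j ∈ J, q ^ ((N : ℤ) - 2 * ((j : ℕ) + 1 : ℤ) + 1)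
      = ∑ m ∈ Finset.Icc 1 (lam ⟨0, hN⟩), ∑ s ∈ Finset.Icc 1 r,
          (-1 : ℂ) ^ (s - 1) * qbinom q N (r - s) *
            q ^ (s * (N - conjPart N lam m)) *
              (qint q (s * conjPart N lam m) / qint q s) :=
  energy_additivity_identity_general N r hN hrN q hq0 hq lam hlam

end Stmt15
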